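/- arXiv:2402.10825 — 5 statements merged into one kernel-verified Lean document; each statement's English description precedes it below -/
import Mathlib

section
/- Let x₁, y₁, z₁ ∈ (0,1) and α > 0, β ∈ ℝ. Define V(t) along the flow ẋ₁ = x₁(1−x₁)[α(y₁+z₁−1) + β(y₁−z₁)] (and cyclically for y₁, z₁), where V = x₁y₁z₁ + (1−x₁)(1−y₁)(1−z₁). Then dV/dt = α·Σ_cyc x₁(1−x₁)(y₁+z₁−1)², which is nonnegative, and it is zero only if y₁+z₁ = 1, z₁+x₁ = 1, and x₁+y₁ = 1 simultaneously (i.e., x₁ = y₁ = z₁ = 1/2). -/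
/-- For `x, y, z ∈ (0,1)` and `α > 0`, the derivative of
`V = xyz + (1−x)(1−y)(1−z)` along the replicator flow
`ẋ = x(1−x)[α(y+z−1) + β(y−z)]` (and cyclically) equals
`α·Σ_cyc x(1−x)(y+z−1)²`, is nonnegative, and vanishes only if
`y+z = 1`, `z+x = 1`, `x+y = 1` (i.e. `x = y = z = 1/2`). -/
theorem replicator_V_dot_two_action (α β x y z : ℝ)
    (hx : x ∈ Set.Ioo (0:ℝ) 1) (hy : y ∈ Set.Ioo (0:ℝ) 1) (hz : z ∈ Set.Ioo (0:ℝ) 1)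
    (hα : 0 < α)
    (dx dy dz : ℝ)
    (hdx : dx = x * (1 - x) * (α * (y + z - 1) + β * (y - z)))
    (hdy : dy = y * (1 - y) * (α * (z + x - 1) + β * (z - x)))
    (hdz : dz = z * (1 - z) * (α * (x + y - 1) + β * (x - y))) :
    (dx * (y * z - (1 - y) * (1 - z)) + dy * (z * x - (1 - z) * (1 - x))
        + dz * (x * y - (1 - x) * (1 - y))
      = α * (x * (1 - x) * (y + z - 1)^2 + y * (1 - y) * (z + x - 1)^2
              + z * (1 - z) * (x + y - 1)^2))
    ∧ 0 ≤ α * (x * (1 - x) * (y + z - 1)^2 + y * (1 - y) * (z + x - 1)^2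
              + z * (1 - z) * (x + y - 1)^2)
    ∧ (α * (x * (1 - x) * (y + z - 1)^2 + y * (1 - y) * (z + x - 1)^2
              + z * (1 - z) * (x + y - 1)^2) = 0 →
        y + z = 1 ∧ z + x = 1 ∧ x + y = 1 ∧ x = 1/2 ∧ y = 1/2 ∧ z = 1/2) := by
  obtain ⟨hx0, hx1⟩ := hx
  obtain ⟨hy0, hy1⟩ := hy
  obtain ⟨hz0, hz1⟩ := hz
  have px : 0 < x * (1 - x) := mul_pos hx0 (by linarith)
  have py : 0 < y * (1 - y) := mul_pos hy0 (by linarith)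
  have pz : 0 < z * (1 - z) := mul_pos hz0 (by linarith)
  have t1 : 0 ≤ x * (1 - x) * (y + z - 1)^2 := by positivity
  have t2 : 0 ≤ y * (1 - y) * (z + x - 1)^2 := by positivity
  have t3 : 0 ≤ z * (1 - z) * (x + y - 1)^2 := by positivity
  refine ⟨by subst hdx hdy hdz; ring, by positivity, fun h => ?_⟩
  have hsum : x * (1 - x) * (y + z - 1)^2 + y * (1 - y) * (z + x - 1)^2
      + z * (1 - z) * (x + y - 1)^2 = 0 := by
    rcases mul_eq_zero.mp h with h' | h'
    · exact absurd h' (ne_of_gt hα)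
    · exact h'
  have e1 : x * (1 - x) * (y + z - 1)^2 = 0 := by linarith
  have e2 : y * (1 - y) * (z + x - 1)^2 = 0 := by linarith
  have e3 : z * (1 - z) * (x + y - 1)^2 = 0 := by linarith
  have s1 : y + z = 1 := by
    have := (mul_eq_zero.mp e1).resolve_left (ne_of_gt px)
    have := pow_eq_zero_iff (n := 2) (by norm_num) |>.mp this
    linarith
  have s2 : z + x = 1 := by
    have := (mul_eq_zero.mp e2).resolve_left (ne_of_gt py)
    have := pow_eq_zero_iff (n := 2) (by norm_num) |>.mp this
    linarith
  have s3 : x + y = 1 := by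
    have := (mul_eq_zero.mp e3).resolve_left (ne_of_gt pz)
    have := pow_eq_zero_iff (n := 2) (by norm_num) |>.mp this
    linarith
  exact ⟨s1, s2, s3, by linarith, by linarith, by linarith⟩
end

section
/- For x, y, z in the (m-1)-simplex with all coordinates positive, Σ_cyc [Σ_i x_i (y_i z_i)² − (Σ_i x_i y_i z_i)²] = 0 if and only if x = y = z = (1/m,…,1/m). -/
lemma var_aux (m : ℕ) (w f : Fin m → ℝ) (hw : ∀ i, 0 < w i) (hs : ∑ i, w i = 1) :
    0 ≤ ∑ i, w i * (f i)^2 - (∑ i, w i * f i)^2 ∧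
    (∑ i, w i * (f i)^2 - (∑ i, w i * f i)^2 = 0 ↔ ∀ i, f i = ∑ j, w j * f j) := by
  set μ := ∑ j, w j * f j with hμ
  have key : ∑ i, w i * (f i)^2 - μ^2 = ∑ i, w i * (f i - μ)^2 := by
    have h1 : ∑ i, w i * (f i - μ)^2
        = ∑ i, (w i * (f i)^2 - 2*μ*(w i * f i) + μ^2 * w i) := by
      apply Finset.sum_congr rfl; intro i _; ring
    rw [h1, Finset.sum_add_distrib, Finset.sum_sub_distrib, ← Finset.mul_sum,
      ← Finset.mul_sum, hs, ← hμ]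
    ring
  have hnn : ∀ i ∈ Finset.univ, 0 ≤ w i * (f i - μ)^2 :=
    fun i _ => mul_nonneg (hw i).le (sq_nonneg _)
  constructor
  · rw [key]; exact Finset.sum_nonneg hnn
  · rw [key, Finset.sum_eq_zero_iff_of_nonneg hnn]
    constructor
    · intro h i
      have h2 := h i (Finset.mem_univ i)
      have h3 := (mul_eq_zero.1 h2).resolve_left (hw i).ne'
      have h4 : f i - μ = 0 := by
        have := sq_eq_zero_iff.1 h3
        exact this
      linarith
    · intro h i _; rw [h i]; ring

lemma const_eq_inv (m : ℕ) (x : Fin m → ℝ) (hc : ∀ i j, x i = x j)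
    (hs : ∑ i, x i = 1) : x = fun _ => (1 : ℝ) / m := by
  funext i
  have h1 : ∑ j, x j = m * x i := by
    rw [Finset.sum_congr rfl (fun j _ => hc j i)]
    simp [Finset.sum_const, Finset.card_univ, mul_comm]
  have hm0 : (m : ℝ) ≠ 0 := by
    have : 0 < m := by
      by_contra h
      push_neg at h
      interval_cases m
      · simp at hs
    exact_mod_cast this.ne'
  field_simp
  linarith [h1.symm.trans hs]

/-- For `x, y, z` in the simplex with all coordinates positive,
the cyclic sum of variances `Σ_cyc [∑ i x (yz)² − (∑ i xyz)²]` vanishes iff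
`x = y = z = (1/m, …, 1/m)`. -/
theorem cyclic_variance_zero_iff_uniform (m : ℕ) (hm : 1 ≤ m)
    (x y z : Fin m → ℝ)
    (hx : (∀ i, 0 < x i) ∧ ∑ i, x i = 1)
    (hy : (∀ i, 0 < y i) ∧ ∑ i, y i = 1)
    (hz : (∀ i, 0 < z i) ∧ ∑ i, z i = 1) :
    ((∑ i, x i * (y i * z i)^2 - (∑ i, x i * y i * z i)^2)
       + (∑ i, y i * (z i * x i)^2 - (∑ i, y i * z i * x i)^2)
       + (∑ i, z i * (x i * y i)^2 - (∑ i, z i * x i * y i)^2) = 0)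
      ↔ (x = fun _ => (1 : ℝ) / m) ∧ (y = fun _ => (1 : ℝ) / m)
          ∧ (z = fun _ => (1 : ℝ) / m) := by
  obtain ⟨hxp, hxs⟩ := hx
  obtain ⟨hyp, hys⟩ := hy
  obtain ⟨hzp, hzs⟩ := hz
  have hm0 : (m : ℝ) ≠ 0 := by positivity
  -- rewrite the triple products
  have e1 : ∀ i, x i * y i * z i = x i * (y i * z i) := fun i => by ring
  have e2 : ∀ i, y i * z i * x i = y i * (z i * x i) := fun i => by ring
  have e3 : ∀ i, z i * x i * y i = z i * (x i * y i) := fun i => by ring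
  have r1 : (∑ i, x i * y i * z i) = ∑ i, x i * (y i * z i) :=
    Finset.sum_congr rfl (fun i _ => e1 i)
  have r2 : (∑ i, y i * z i * x i) = ∑ i, y i * (z i * x i) :=
    Finset.sum_congr rfl (fun i _ => e2 i)
  have r3 : (∑ i, z i * x i * y i) = ∑ i, z i * (x i * y i) :=
    Finset.sum_congr rfl (fun i _ => e3 i)
  obtain ⟨v1n, v1z⟩ := var_aux m x (fun i => y i * z i) hxp hxs
  obtain ⟨v2n, v2z⟩ := var_aux m y (fun i => z i * x i) hyp hys
  obtain ⟨v3n, v3z⟩ := var_aux m z (fun i => x i * y i) hzp hzs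
  rw [r1, r2, r3]
  constructor
  · intro h
    have h1 : ∑ i, x i * (y i * z i)^2 - (∑ i, x i * (y i * z i))^2 = 0 := by linarith
    have h2 : ∑ i, y i * (z i * x i)^2 - (∑ i, y i * (z i * x i))^2 = 0 := by linarith
    have h3 : ∑ i, z i * (x i * y i)^2 - (∑ i, z i * (x i * y i))^2 = 0 := by linarith
    have c1 := v1z.1 h1
    have c2 := v2z.1 h2
    have c3 := v3z.1 h3
    -- pairwise products are constant
    have hc1 : ∀ i j, y i * z i = y j * z j := fun i j => (c1 i).trans (c1 j).symm
    have hc2 : ∀ i j, z i * x i = z j * x j := fun i j => (c2 i).trans (c2 j).symm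
    have hc3 : ∀ i j, x i * y i = x j * y j := fun i j => (c3 i).trans (c3 j).symm
    -- each vector is constant
    have key : ∀ (a b c : Fin m → ℝ), (∀ i, 0 < a i) → (∀ i, 0 < b i) → (∀ i, 0 < c i) →
        (∀ i j, b i * c i = b j * c j) → (∀ i j, c i * a i = c j * a j) →
        (∀ i j, a i * b i = a j * b j) → ∀ i j, a i = a j := by
      intro a b c ha hb hc k1 k2 k3 i j
      have hsq : a i ^ 2 * (b i * c i) = a j ^ 2 * (b j * c j) := by
        have : a i ^ 2 * (b i * c i) = (c i * a i) * (a i * b i) := by ring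
        rw [this, k2 i j, k3 i j]; ring
      rw [k1 i j] at hsq
      have hbc : 0 < b j * c j := mul_pos (hb j) (hc j)
      have hsq2 : a i ^ 2 = a j ^ 2 := mul_right_cancel₀ hbc.ne' hsq
      have : (a i - a j) * (a i + a j) = 0 := by nlinarith
      rcases mul_eq_zero.1 this with h | h
      · linarith
      · nlinarith [ha i, ha j]
    have hxc := key x y z hxp hyp hzp hc1 hc2 hc3
    have hyc := key y z x hyp hzp hxp hc2 hc3 hc1
    have hzc := key z x y hzp hxp hyp hc3 hc1 hc2
    exact ⟨const_eq_inv m x hxc hxs, const_eq_inv m y hyc hys, const_eq_inv m z hzc hzs⟩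
  · rintro ⟨rfl, rfl, rfl⟩
    simp only [Finset.sum_const, Finset.card_univ, Fintype.card_fin, nsmul_eq_mul]
    field_simp
    ring
end

section
/- Let f(y,z) = k₀yz + k₊y + k₋z with k₊ > 0, k₋ < 0, k₀ + k₊ > 0, k₀ + k₋ < 0. Suppose x*, y*, z* ∈ Δ^{m-1} form a Nash equilibrium of the three-player matching game, i.e., there exist constants C_X, C_Y, C_Z such that for all i: x*_i > 0 ⟹ f(y*_i, z*_i) = C_X and x*_i = 0 ⟹ f(y*_i, z*_i) ≤ C_X, and cyclically for the other two players. Then x* = y* = z*. -/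
/-- Key pointwise inequality on the cube `[0,1]³`. -/
lemma nash_symmetry_key (a b c : ℝ) (ha : 0 ≤ a) (hb : 0 ≤ b) (hc : 0 ≤ c)
    (ha1 : a ≤ 1) (hb1 : b ≤ 1) (hc1 : c ≤ 1) :
    a^2*b + b^2*c + c^2*a - 3*a*b*c ≤ a^2 + b^2 + c^2 - a*b - b*c - c*a := by
  nlinarith [mul_nonneg (sub_nonneg.2 hc1) (sq_nonneg (a-b)),
    mul_nonneg (sub_nonneg.2 ha1) (sq_nonneg (b-c)),
    mul_nonneg (sub_nonneg.2 hb1) (sq_nonneg (c-a)),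
    mul_nonneg (mul_nonneg ha hb) hc, sq_nonneg (a-b), sq_nonneg (b-c), sq_nonneg (c-a)]

/-- Cyclic AM–GM. -/
lemma nash_symmetry_amgm (a b c : ℝ) (ha : 0 ≤ a) (hb : 0 ≤ b) (hc : 0 ≤ c) :
    0 ≤ a^2*b + b^2*c + c^2*a - 3*a*b*c := by
  nlinarith [mul_nonneg (mul_nonneg ha ha) hb, mul_nonneg hc (sq_nonneg (a-b)),
    mul_nonneg ha (sq_nonneg (b-c)), mul_nonneg hb (sq_nonneg (c-a))]

/-- If the quadratic spread vanishes, the three are equal. -/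
lemma nash_symmetry_diag (a b c : ℝ)
    (h : a^2 + b^2 + c^2 - a*b - b*c - c*a = 0) : a = b ∧ b = c := by
  constructor <;>
  nlinarith [sq_nonneg (a-b), sq_nonneg (b-c), sq_nonneg (c-a)]

/-- Any Nash equilibrium of the three-player matching game, characterized
by the stated KKT-type conditions with payoff gradient `f(y,z) = k₀yz + k₊y + k₋z`
(`k₊ > 0`, `k₋ < 0`, `k₀ + k₊ > 0`, `k₀ + k₋ < 0`), is symmetric: `x = y = z`. -/
theorem nash_symmetry (m : ℕ) (k₀ kp km : ℝ)
    (hkp : 0 < kp) (hkm : km < 0) (h1 : 0 < k₀ + kp) (h2 : k₀ + km < 0)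
    (f : ℝ → ℝ → ℝ) (hf : ∀ a b : ℝ, f a b = k₀ * a * b + kp * a + km * b)
    (x y z : Fin m → ℝ)
    (hx : (∀ i, 0 ≤ x i) ∧ ∑ i, x i = 1)
    (hy : (∀ i, 0 ≤ y i) ∧ ∑ i, y i = 1)
    (hz : (∀ i, 0 ≤ z i) ∧ ∑ i, z i = 1)
    (CX CY CZ : ℝ)
    (hCX : ∀ i, (0 < x i → f (y i) (z i) = CX) ∧ (x i = 0 → f (y i) (z i) ≤ CX))
    (hCY : ∀ i, (0 < y i → f (z i) (x i) = CY) ∧ (y i = 0 → f (z i) (x i) ≤ CY))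
    (hCZ : ∀ i, (0 < z i → f (x i) (y i) = CZ) ∧ (z i = 0 → f (x i) (y i) ≤ CZ)) :
    x = y ∧ y = z := by
  obtain ⟨hx0, hx1⟩ := hx
  obtain ⟨hy0, hy1⟩ := hy
  obtain ⟨hz0, hz1⟩ := hz
  -- upper bounds by 1
  have hub : ∀ (w : Fin m → ℝ), (∀ i, 0 ≤ w i) → ∑ i, w i = 1 → ∀ i, w i ≤ 1 := by
    intro w hw0 hw1 i
    calc w i ≤ ∑ j, w j := Finset.single_le_sum (fun j _ => hw0 j) (Finset.mem_univ i)
    _ = 1 := hw1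
  have hxu := hub x hx0 hx1
  have hyu := hub y hy0 hy1
  have hzu := hub z hz0 hz1
  -- f ≤ C everywhere, and weighted sum equals C
  have hle : ∀ (w : Fin m → ℝ) (g : Fin m → ℝ) (C : ℝ), (∀ i, 0 ≤ w i) →
      (∀ i, (0 < w i → g i = C) ∧ (w i = 0 → g i ≤ C)) → ∀ i, g i ≤ C := by
    intro w g C hw0 h i
    rcases (hw0 i).lt_or_eq with hlt | heq
    · exact le_of_eq ((h i).1 hlt)
    · exact (h i).2 heq.symm
  have heq : ∀ (w : Fin m → ℝ) (g : Fin m → ℝ) (C : ℝ), (∀ i, 0 ≤ w i) → ∑ i, w i = 1 →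
      (∀ i, (0 < w i → g i = C) ∧ (w i = 0 → g i ≤ C)) → ∑ i, w i * g i = C := by
    intro w g C hw0 hw1 h
    have : ∀ i ∈ Finset.univ, w i * g i = w i * C := by
      intro i _
      rcases (hw0 i).lt_or_eq with hlt | heqi
      · rw [(h i).1 hlt]
      · rw [← heqi]; ring
    rw [Finset.sum_congr rfl this, ← Finset.sum_mul, hw1, one_mul]
  have hgleX := hle x (fun i => f (y i) (z i)) CX hx0 hCX
  have hgleY := hle y (fun i => f (z i) (x i)) CY hy0 hCY
  have hgleZ := hle z (fun i => f (x i) (y i)) CZ hz0 hCZ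
  have heqX := heq x (fun i => f (y i) (z i)) CX hx0 hx1 hCX
  have heqY := heq y (fun i => f (z i) (x i)) CY hy0 hy1 hCY
  have heqZ := heq z (fun i => f (x i) (y i)) CZ hz0 hz1 hCZ
  -- shifted weighted sums are ≤ C
  have hshift : ∀ (w : Fin m → ℝ) (g : Fin m → ℝ) (C : ℝ), (∀ i, 0 ≤ w i) → ∑ i, w i = 1 →
      (∀ i, g i ≤ C) → ∑ i, w i * g i ≤ C := by
    intro w g C hw0 hw1 hg
    calc ∑ i, w i * g i ≤ ∑ i, w i * C :=
          Finset.sum_le_sum (fun i _ => mul_le_mul_of_nonneg_left (hg i) (hw0 i))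
    _ = C := by rw [← Finset.sum_mul, hw1, one_mul]
  have hsY := hshift y (fun i => f (y i) (z i)) CX hy0 hy1 hgleX
  have hsZ := hshift z (fun i => f (z i) (x i)) CY hz0 hz1 hgleY
  have hsX := hshift x (fun i => f (x i) (y i)) CZ hx0 hx1 hgleZ
  -- master inequality
  set D : Fin m → ℝ := fun i => x i^2 + y i^2 + z i^2 - x i*y i - y i*z i - z i*x i with hD
  set E : Fin m → ℝ := fun i => x i^2*y i + y i^2*z i + z i^2*x i - 3*x i*y i*z i with hE
  have master : k₀ * (∑ i, E i) + kp * (∑ i, D i) ≤ 0 := by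
    have hsum : ∑ i, (y i * f (y i) (z i) + z i * f (z i) (x i) + x i * f (x i) (y i)) ≤
        ∑ i, (x i * f (y i) (z i) + y i * f (z i) (x i) + z i * f (x i) (y i)) := by
      rw [Finset.sum_add_distrib, Finset.sum_add_distrib,
          Finset.sum_add_distrib, Finset.sum_add_distrib, heqX, heqY, heqZ]
      have := add_le_add (add_le_add hsY hsZ) hsX
      linarith
    have hexp : ∀ i, (y i * f (y i) (z i) + z i * f (z i) (x i) + x i * f (x i) (y i)) -
        (x i * f (y i) (z i) + y i * f (z i) (x i) + z i * f (x i) (y i)) =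
        k₀ * E i + kp * D i := by
      intro i
      simp only [hf, hD, hE]
      ring
    have : ∑ i, (k₀ * E i + kp * D i) ≤ 0 := by
      have h := sub_nonpos.2 hsum
      rw [← Finset.sum_sub_distrib] at h
      calc ∑ i, (k₀ * E i + kp * D i)
          = ∑ i, ((y i * f (y i) (z i) + z i * f (z i) (x i) + x i * f (x i) (y i)) -
            (x i * f (y i) (z i) + y i * f (z i) (x i) + z i * f (x i) (y i))) :=
            Finset.sum_congr rfl (fun i _ => (hexp i).symm)
        _ ≤ 0 := h
    rw [Finset.sum_add_distrib, ← Finset.mul_sum, ← Finset.mul_sum] at this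
    exact this
  have hDnn : ∀ i, 0 ≤ D i := by
    intro i; simp only [hD]
    nlinarith [sq_nonneg (x i - y i), sq_nonneg (y i - z i), sq_nonneg (z i - x i)]
  have hEnn : ∀ i, 0 ≤ E i := fun i => nash_symmetry_amgm _ _ _ (hx0 i) (hy0 i) (hz0 i)
  have hED : ∀ i, E i ≤ D i := fun i =>
    nash_symmetry_key _ _ _ (hx0 i) (hy0 i) (hz0 i) (hxu i) (hyu i) (hzu i)
  have hSDnn : 0 ≤ ∑ i, D i := Finset.sum_nonneg (fun i _ => hDnn i)
  have hSEnn : 0 ≤ ∑ i, E i := Finset.sum_nonneg (fun i _ => hEnn i)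
  have hSED : ∑ i, E i ≤ ∑ i, D i := Finset.sum_le_sum (fun i _ => hED i)
  -- conclude ∑ D ≤ 0
  have hSD0 : ∑ i, D i = 0 := by
    rcases le_or_gt k₀ 0 with hk | hk
    · nlinarith
    · nlinarith
  have hDzero : ∀ i ∈ Finset.univ, D i = 0 :=
    (Finset.sum_eq_zero_iff_of_nonneg (fun i _ => hDnn i)).1 hSD0
  have hpt : ∀ i, x i = y i ∧ y i = z i := by
    intro i
    have h0 : D i = 0 := hDzero i (Finset.mem_univ i)
    simp only [hD] at h0
    exact nash_symmetry_diag _ _ _ h0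
  exact ⟨funext fun i => (hpt i).1, funext fun i => (hpt i).2⟩
end

section
/- In the two-action three-player matching game with FTRL dynamics ẋ₁ = w(x₁)[α(y₁+z₁−1) + β(y₁−z₁)] and cyclic analogues, where w > 0 on (0,1), if α = 0 then V = x₁y₁z₁ + (1−x₁)(1−y₁)(1−z₁) is a conserved quantity of the flow: dV/dt = 0 along any trajectory in (0,1)³. -/
/-- In the two-action game with FTRL dynamics
`ẋ = w(x)[α(y+z−1) + β(y−z)]` (and cyclically), where `w` is the entropic weight
`w(s) = s(1−s)` or the Euclidean weight `w(s) = 1/2` (both positive on `(0,1)`),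
if `α = 0` then `V = xyz + (1−x)(1−y)(1−z)` is conserved: its derivative along
the flow vanishes on `(0,1)³`. -/
theorem V_conserved_when_alpha_zero (α β : ℝ) (hα : α = 0)
    (w : ℝ → ℝ)
    (hw : (w = fun s => s * (1 - s)) ∨ (w = fun _ => (1:ℝ)/2))
    (hwpos : ∀ s ∈ Set.Ioo (0:ℝ) 1, 0 < w s)
    (x y z : ℝ)
    (hx : x ∈ Set.Ioo (0:ℝ) 1) (hy : y ∈ Set.Ioo (0:ℝ) 1) (hz : z ∈ Set.Ioo (0:ℝ) 1)
    (dx dy dz : ℝ)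
    (hdx : dx = w x * (α * (y + z - 1) + β * (y - z)))
    (hdy : dy = w y * (α * (z + x - 1) + β * (z - x)))
    (hdz : dz = w z * (α * (x + y - 1) + β * (x - y))) :
    dx * (y * z - (1 - y) * (1 - z)) + dy * (z * x - (1 - z) * (1 - x))
      + dz * (x * y - (1 - x) * (1 - y)) = 0 := by
  subst hα hdx hdy hdz
  rcases hw with h | h <;> subst h <;> simp only [] <;> ring
end

section
/- Suppose (x*, y*, z*) is a Nash equilibrium of the m-action three-player matching game with payoff gradient f(y,z) = k₀yz + k₊y + k₋z, k₊ > 0 > k₋, k₀ + k₊ > 0, k₀ + k₋ < 0. Then it cannot happen that x* = y* ≠ z*: if there exist indices i₁ with x*_{i₁} = y*_{i₁} > z*_{i₁} and i₂ with z*_{i₂} > x*_{i₂} = y*_{i₂}, the best-response conditions yield both C_Z > C_Y and C_Y > C_Z, a contradiction. -/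
/-- A Nash equilibrium of the matching game cannot satisfy
`x = y ≠ z`: under the best-response (KKT) conditions, `x = y` together with
`x ≠ z` yields a contradiction. -/
theorem nash_no_two_equal_one_different (m : ℕ) (k₀ kp km : ℝ)
    (hkp : 0 < kp) (hkm : km < 0) (h1 : 0 < k₀ + kp) (h2 : k₀ + km < 0)
    (f : ℝ → ℝ → ℝ) (hf : ∀ a b : ℝ, f a b = k₀ * a * b + kp * a + km * b)
    (x y z : Fin m → ℝ)
    (hx : (∀ i, 0 ≤ x i) ∧ ∑ i, x i = 1)
    (hy : (∀ i, 0 ≤ y i) ∧ ∑ i, y i = 1)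
    (hz : (∀ i, 0 ≤ z i) ∧ ∑ i, z i = 1)
    (CX CY CZ : ℝ)
    (hCX : ∀ i, (0 < x i → f (y i) (z i) = CX) ∧ (x i = 0 → f (y i) (z i) ≤ CX))
    (hCY : ∀ i, (0 < y i → f (z i) (x i) = CY) ∧ (y i = 0 → f (z i) (x i) ≤ CY))
    (hCZ : ∀ i, (0 < z i → f (x i) (y i) = CZ) ∧ (z i = 0 → f (x i) (y i) ≤ CZ))
    (hxy : x = y) (hxz : x ≠ z) :
    False := by
  subst hxy
  obtain ⟨hx0, hx1⟩ := hx
  obtain ⟨hz0, hz1⟩ := hz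
  -- each x i ≤ 1
  have hxle : ∀ i, x i ≤ 1 := by
    intro i
    calc x i ≤ ∑ j, x j := Finset.single_le_sum (fun j _ => hx0 j) (Finset.mem_univ i)
    _ = 1 := hx1
  have hpos : ∀ i, 0 < k₀ * x i + kp := by
    intro i
    rcases (hx0 i).lt_or_eq with h | h
    · nlinarith [mul_pos h h1, hxle i]
    · nlinarith
  -- existence of both kinds of indices
  have hne : ∃ i, x i ≠ z i := by
    by_contra h
    push_neg at h
    exact hxz (funext h)
  have hex1 : ∃ i, z i < x i := by
    by_contra h
    push_neg at h
    obtain ⟨i0, hi0⟩ := hne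
    have : ∑ i, x i < ∑ i, z i :=
      Finset.sum_lt_sum (fun j _ => h j) ⟨i0, Finset.mem_univ i0, lt_of_le_of_ne (h i0) hi0⟩
    rw [hx1, hz1] at this
    exact lt_irrefl _ this
  have hex2 : ∃ i, x i < z i := by
    by_contra h
    push_neg at h
    obtain ⟨i0, hi0⟩ := hne
    have : ∑ i, z i < ∑ i, x i :=
      Finset.sum_lt_sum (fun j _ => h j) ⟨i0, Finset.mem_univ i0, lt_of_le_of_ne (h i0) (Ne.symm hi0)⟩
    rw [hx1, hz1] at this
    exact lt_irrefl _ this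
  obtain ⟨i₁, hi₁⟩ := hex1
  obtain ⟨i₂, hi₂⟩ := hex2
  -- from i₁ : CY < CZ
  have hxi₁pos : 0 < x i₁ := lt_of_le_of_lt (hz0 i₁) hi₁
  have hCYeq : f (z i₁) (x i₁) = CY := (hCY i₁).1 hxi₁pos
  have hCZge : f (x i₁) (x i₁) ≤ CZ := by
    rcases lt_or_eq_of_le (hz0 i₁) with h | h
    · exact le_of_eq ((hCZ i₁).1 h)
    · exact (hCZ i₁).2 h.symm
  have hlt1 : f (z i₁) (x i₁) < f (x i₁) (x i₁) := by
    rw [hf, hf]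
    nlinarith [hpos i₁, hi₁]
  have hCYZ : CY < CZ := by
    calc CY = f (z i₁) (x i₁) := hCYeq.symm
    _ < f (x i₁) (x i₁) := hlt1
    _ ≤ CZ := hCZge
  -- from i₂ : CZ < CY
  have hzi₂pos : 0 < z i₂ := lt_of_le_of_lt (hx0 i₂) hi₂
  have hCZeq : f (x i₂) (x i₂) = CZ := (hCZ i₂).1 hzi₂pos
  have hCYge : f (z i₂) (x i₂) ≤ CY := by
    rcases lt_or_eq_of_le (hx0 i₂) with h | h
    · exact le_of_eq ((hCY i₂).1 h)
    · exact (hCY i₂).2 h.symm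
  have hlt2 : f (x i₂) (x i₂) < f (z i₂) (x i₂) := by
    rw [hf, hf]
    nlinarith [hpos i₂, hi₂]
  have hCZY : CZ < CY := by
    calc CZ = f (x i₂) (x i₂) := hCZeq.symm
    _ < f (z i₂) (x i₂) := hlt2
    _ ≤ CY := hCYge
  exact lt_irrefl _ (hCYZ.trans hCZY)
end
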